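/- For N ≥ 2 Hermitian observables A_1, ..., A_N and a density matrix ρ: ∑_{i=1}^N Δ²_ρ(A_i) ≥ (1/N)·Δ²_ρ(∑_{i=1}^N A_i) + (2/(N²(N−1)))·(∑_{1≤i<j≤N} Δ_ρ(A_i − A_j))² (the Song et al. uncertainty relation, Eq. (5)). -/

import Mathlib

open Finset ComplexOrder

/-- Variance of an observable `M` in the state `ρ`. -/
noncomputable def qvar {d : ℕ} (ρ M : Matrix (Fin d) (Fin d) ℂ) : ℝ :=
  ((ρ * M ^ 2).trace - (ρ * M).trace ^ 2).re

/-- Standard deviation of an observable `M` in the state `ρ`. -/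
noncomputable def qdev {d : ℕ} (ρ M : Matrix (Fin d) (Fin d) ℂ) : ℝ :=
  Real.sqrt (qvar ρ M)

/-!
The variance is the diagonal of the covariance bilinear form
`(X, Y) ↦ Tr(ρXY) - Tr(ρX) Tr(ρY)`, so Lagrange's identity
`N ∑ Δ²(A_i) = Δ²(∑ A_i) + ∑_{i<j} Δ²(A_i - A_j)` holds for it. Since variances of Hermitian
observables are nonnegative, `Δ²(A_i - A_j) = Δ(A_i - A_j)²`, and Cauchy–Schwarz over the
`N(N-1)/2` pairs `i < j` bounds the last sum below by `2 (∑_{i<j} Δ(A_i - A_j))² / (N(N-1))`.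
-/

section PairSums

variable {ι : Type*} [Fintype ι] [LinearOrder ι]

theorem Finset.sum_filter_lt_add_swap {M : Type*} [AddCommMonoid M] (f : ι → ι → M) :
    ∑ i, ∑ j ∈ univ.filter (fun j => i < j), (f i j + f j i) =
      ∑ i, ∑ j ∈ univ.erase i, f i j := by
  have hswap : ∑ i, ∑ j ∈ univ.filter (fun j => i < j), f j i =
      ∑ i, ∑ j ∈ univ.filter (fun j => j < i), f i j :=
    Finset.sum_comm' (by simp)
  simp only [sum_add_distrib]
  rw [hswap, ← sum_add_distrib]
  refine sum_congr rfl fun i _ => ?_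
  rw [← filter_ne', sum_filter, sum_filter, sum_filter, ← sum_add_distrib]
  refine sum_congr rfl fun j _ => ?_
  rcases lt_trichotomy i j with h | rfl | h
  · simp [h, h.ne', not_lt_of_gt h]
  · simp
  · simp [h.ne, h.not_gt, h.not_ge]

theorem two_mul_sum_card_filter_lt :
    2 * ∑ i : ι, (#(univ.filter (fun j => i < j)) : ℝ) =
      Fintype.card ι * (Fintype.card ι - 1) := by
  have h := Finset.sum_filter_lt_add_swap (fun (_ _ : ι) => (1 : ℝ))
  simp only [sum_erase_eq_sub (mem_univ _), sum_const, card_univ, nsmul_eq_mul, mul_one] at h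
  rw [← h, mul_sum]
  simp only [one_add_one_eq_two, mul_comm]

theorem sq_sum_filter_lt_le (f : ι → ι → ℝ) :
    2 * (∑ i, ∑ j ∈ univ.filter (fun j => i < j), f i j) ^ 2 ≤
      Fintype.card ι * (Fintype.card ι - 1) *
        ∑ i, ∑ j ∈ univ.filter (fun j => i < j), f i j ^ 2 := by
  have hcs := sq_sum_le_card_mul_sum_sq (s := univ.sigma fun i => univ.filter (fun j => i < j))
    (f := fun p => f p.1 p.2)
  rw [card_sigma, Nat.cast_sum] at hcs
  rw [← two_mul_sum_card_filter_lt]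
  simp only [sum_sigma'] at hcs ⊢
  linarith

theorem LinearMap.BilinForm.lagrange_identity {R M : Type*} [CommRing R] [AddCommGroup M]
    [Module R M] (B : LinearMap.BilinForm R M) (a : ι → M) :
    Fintype.card ι * ∑ i, B (a i) (a i) =
      B (∑ i, a i) (∑ i, a i) +
        ∑ i, ∑ j ∈ univ.filter (fun j => i < j), B (a i - a j) (a i - a j) := by
  have hpair : ∀ i j, B (a i - a j) (a i - a j) =
      (B (a i) (a i) + B (a j) (a j)) - (B (a i) (a j) + B (a j) (a i)) := by
    intro i j
    simp only [map_sub, LinearMap.sub_apply]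
    ring
  simp only [hpair, sum_sub_distrib, Finset.sum_filter_lt_add_swap (fun i j => B (a i) (a i)),
    Finset.sum_filter_lt_add_swap (fun i j => B (a i) (a j)), sum_erase_eq_sub (mem_univ _),
    map_sum, LinearMap.sum_apply, sum_const, card_univ]
  rw [sum_comm]
  simp only [nsmul_eq_mul, ← mul_sum]
  ring

end PairSums

namespace Matrix

variable {n : Type*} [Fintype n]

noncomputable def qcov (ρ : Matrix n n ℂ) : LinearMap.BilinForm ℂ (Matrix n n ℂ) :=
  LinearMap.mk₂ ℂ (fun X Y => (ρ * (X * Y)).trace - (ρ * X).trace * (ρ * Y).trace)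
    (fun X X' Y => by simp only [add_mul, mul_add, trace_add]; ring)
    (fun c X Y => by simp only [smul_mul_assoc, mul_smul_comm, trace_smul, smul_eq_mul]; ring)
    (fun X Y Y' => by simp only [mul_add, trace_add]; ring)
    (fun c X Y => by simp only [mul_smul_comm, trace_smul, smul_eq_mul]; ring)

theorem qcov_apply (ρ X Y : Matrix n n ℂ) :
    qcov ρ X Y = (ρ * (X * Y)).trace - (ρ * X).trace * (ρ * Y).trace := rfl

variable {ρ : Matrix n n ℂ}

theorem IsHermitian.isSelfAdjoint_trace_mul (hρ : ρ.IsHermitian) {M : Matrix n n ℂ}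
    (hM : M.IsHermitian) : IsSelfAdjoint (ρ * M).trace := by
  rw [IsSelfAdjoint, ← trace_conjTranspose, conjTranspose_mul, hρ.eq, hM.eq, trace_mul_comm]

variable [DecidableEq n]

theorem PosSemidef.re_trace_mul_sq_nonneg (hρ : ρ.PosSemidef) {X : Matrix n n ℂ}
    (hX : X.IsHermitian) : 0 ≤ (ρ * X ^ 2).trace.re := by
  have h := (hρ.conjTranspose_mul_mul_same X).trace_nonneg
  rw [hX.eq, trace_mul_cycle, trace_mul_comm, ← pow_two] at h
  exact (Complex.nonneg_iff.1 h).1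

theorem qcov_sub_smul_one (hρ1 : ρ.trace = 1) (X : Matrix n n ℂ) (c : ℂ) :
    qcov ρ (X - c • 1) (X - c • 1) = qcov ρ X X := by
  have hleft : ∀ Y, qcov ρ 1 Y = 0 := fun Y => by simp [qcov_apply, hρ1]
  have hright : ∀ Y, qcov ρ Y 1 = 0 := fun Y => by simp [qcov_apply, hρ1]
  simp [hleft, hright]

end Matrix

open Matrix

theorem qvar_eq_re_qcov {d : ℕ} (ρ M : Matrix (Fin d) (Fin d) ℂ) :
    qvar ρ M = (qcov ρ M M).re := by
  rw [qvar, qcov_apply, pow_two, pow_two]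

/-- Shifting `M` by its mean `Tr(ρM)`, which is real, leaves the variance unchanged and turns it
into `Tr(ρX²) ≥ 0` with `X` Hermitian. -/
theorem qvar_nonneg {d : ℕ} {ρ M : Matrix (Fin d) (Fin d) ℂ} (hρ : ρ.PosSemidef)
    (hρ1 : ρ.trace = 1) (hM : M.IsHermitian) : 0 ≤ qvar ρ M := by
  set t : ℝ := (ρ * M).trace.re
  have ht : (t : ℂ) = (ρ * M).trace :=
    Complex.conj_eq_iff_re.1 (hρ.1.isSelfAdjoint_trace_mul hM)
  have hcentered : (ρ * (M - (t : ℂ) • 1)).trace = 0 := by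
    rw [mul_sub, trace_sub, mul_smul_comm, mul_one, trace_smul, hρ1, smul_eq_mul, mul_one, ht,
      sub_self]
  have hherm : (M - (t : ℂ) • 1).IsHermitian :=
    hM.sub (isHermitian_one.smul (Complex.conj_ofReal t))
  rw [qvar_eq_re_qcov, ← qcov_sub_smul_one hρ1 M t, ← qvar_eq_re_qcov, qvar, hcentered]
  simpa using hρ.re_trace_mul_sq_nonneg hherm

theorem song_uncertainty {d N : ℕ} (hN : 2 ≤ N) (ρ : Matrix (Fin d) (Fin d) ℂ)
    (hρ : ρ.PosSemidef) (hρ1 : ρ.trace = 1)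
    (A : Fin N → Matrix (Fin d) (Fin d) ℂ) (hA : ∀ i, (A i).IsHermitian) :
    ∑ i, qvar ρ (A i) ≥
      (1 / (N : ℝ)) * qvar ρ (∑ i, A i) +
      (2 / ((N : ℝ) ^ 2 * ((N : ℝ) - 1))) *
        (∑ i : Fin N, ∑ j ∈ univ.filter (fun j => i < j), qdev ρ (A i - A j)) ^ 2 := by
  have hlagrange : (N : ℝ) * ∑ i, qvar ρ (A i) =
      qvar ρ (∑ i, A i) + ∑ i, ∑ j ∈ univ.filter (fun j => i < j), qvar ρ (A i - A j) := by
    simpa [qvar_eq_re_qcov] using congrArg Complex.re ((qcov ρ).lagrange_identity A)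
  have hcs := sq_sum_filter_lt_le (fun i j => qdev ρ (A i - A j))
  have hsq : ∀ i j, qdev ρ (A i - A j) ^ 2 = qvar ρ (A i - A j) := fun i j =>
    Real.sq_sqrt (qvar_nonneg hρ hρ1 ((hA i).sub (hA j)))
  simp only [hsq, Fintype.card_fin] at hcs
  set P := ∑ i, ∑ j ∈ univ.filter (fun j => i < j), qvar ρ (A i - A j)
  set T := ∑ i : Fin N, ∑ j ∈ univ.filter (fun j => i < j), qdev ρ (A i - A j)
  have hN1 : (1 : ℝ) < N := by exact_mod_cast hN
  have hpairs : 2 / ((N : ℝ) ^ 2 * (N - 1)) * T ^ 2 ≤ 1 / N * P := calc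
    _ = 2 * T ^ 2 / (N * (N * (N - 1))) := by ring
    _ ≤ N * (N - 1) * P / (N * (N * (N - 1))) := by gcongr
    _ = 1 / N * P := by field_simp [(sub_pos.2 hN1).ne']
  calc _ ≤ 1 / (N : ℝ) * qvar ρ (∑ i, A i) + 1 / N * P := by gcongr
    _ = ∑ i, qvar ρ (A i) := by field_simp; linarith
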